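/- arXiv:1801.04889 — 5 statements merged into one kernel-verified Lean document; each statement's English description precedes it below -/
import Mathlib

section
/- Let G be a group with proper length ℓ and associated left-invariant metric d, let X be a proper metric space (closed balls are compact) on which G acts freely and properly discontinuously by isometries, and let f : G → X be the G-equivariant map f(g) = g·x₀ (x₀ = f(1)). Assume f is a coarse embedding: there are nondecreasing ρ₋, ρ₊ : [0,∞) → [0,∞) with ρ₋(t) → ∞ such that ρ₋(d(g,h)) ≤ d_X(f(g), f(h)) ≤ ρ₊(d(g,h)) for all g,h ∈ G. Let (N_n)_{n∈ℕ} be normal subgroups of G with trivial intersection; equip G/N_n with the quotient length induced by ℓ, and equip the orbit space X/N_n with the distance d_{X,n}(N_n·x, N_n·y) = inf{d_X(h·x, h'·y) : h, h' ∈ N_n}. Then there exist nondecreasing ρ'₋, ρ'₊ : [0,∞) → [0,∞) with ρ'₋(t) → ∞ such that for every n and all x̄, ȳ ∈ G/N_n one has ρ'₋(d̄_n(x̄,ȳ)) ≤ d_{X,n}(f_n(x̄), f_n(ȳ)) ≤ ρ'₊(d̄_n(x̄,ȳ)), where d̄_n is the quotient metric on G/N_n and f_n : G/N_n → X/N_n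 is the induced map gN_n ↦ N_n·f(g). -/
/-- A length function on a group. -/
structure IsLengthFunction {G : Type*} [Group G] (ℓ : G → ℝ) : Prop where
  nonneg : ∀ g, 0 ≤ ℓ g
  eq_zero_iff : ∀ g, ℓ g = 0 ↔ g = 1
  inv_eq : ∀ g, ℓ g⁻¹ = ℓ g
  subadd : ∀ g h, ℓ (g * h) ≤ ℓ g + ℓ h

/-- A proper length function: balls are finite. -/
def IsProperLength {G : Type*} [Group G] (ℓ : G → ℝ) : Prop :=
  IsLengthFunction ℓ ∧ ∀ R : ℝ, {g : G | ℓ g ≤ R}.Finite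

/-- The quotient length on the coset space `G ⧸ N`:
`ℓ̄(gN) = inf {ℓ(g') : g'N = gN} = inf {ℓ(gh) : h ∈ N}`. -/
noncomputable def quotLength {G : Type*} [Group G] (ℓ : G → ℝ) (N : Subgroup G) :
    G ⧸ N → ℝ :=
  fun x => sInf {r : ℝ | ∃ g : G, QuotientGroup.mk g = x ∧ ℓ g = r}

/-- The quotient metric on the coset space `G ⧸ N` induced by a length function `ℓ`:
`d̄(xN, yN) = inf {ℓ(g⁻¹h) : gN = xN, hN = yN}`; for normal `N` this is the metric of the
quotient length. -/
noncomputable def quotDist {G : Type*} [Group G] (ℓ : G → ℝ) (N : Subgroup G) :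
    G ⧸ N → G ⧸ N → ℝ :=
  fun x y => sInf {r : ℝ | ∃ g h : G,
    QuotientGroup.mk g = x ∧ QuotientGroup.mk h = y ∧ ℓ (g⁻¹ * h) = r}

/-- A family of spaces (with given distance functions) coarsely embeds uniformly into
Hilbert space: there are real Hilbert spaces `H j`, maps `F j`, and common nondecreasing
control functions `ρ₋, ρ₊` with `ρ₋ → ∞`. -/
def UnifCoarseEmbedHilbert {J : Type*} (X : J → Type*) (d : ∀ j, X j → X j → ℝ) : Prop :=
  ∃ (H : J → Type) (iN : ∀ j, NormedAddCommGroup (H j))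
    (_ : ∀ j, @InnerProductSpace ℝ (H j) inferInstance (iN j).toSeminormedAddCommGroup)
    (_ : ∀ j, @CompleteSpace (H j) (iN j).toMetricSpace.toPseudoMetricSpace.toUniformSpace)
    (F : ∀ j, X j → H j) (ρm ρp : ℝ → ℝ),
    Monotone ρm ∧ Monotone ρp ∧
    Filter.Tendsto ρm Filter.atTop Filter.atTop ∧
    ∀ (j : J) (x y : X j),
      ρm (d j x y) ≤ @dist (H j) (iN j).toMetricSpace.toPseudoMetricSpace.toDist (F j x) (F j y) ∧
      @dist (H j) (iN j).toMetricSpace.toPseudoMetricSpace.toDist (F j x) (F j y) ≤ ρp (d j x y)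

/-- Residual finiteness: every nontrivial element survives in some finite quotient
(equivalently, has nontrivial image under some homomorphism to a finite group). -/
def ResiduallyFinite (G : Type*) [Group G] : Prop :=
  ∀ g : G, g ≠ 1 → ∃ N : Subgroup G, N.Normal ∧ N.FiniteIndex ∧ g ∉ N

/-- Amenability via Reiter's ℓ²-condition: almost-invariant unit vectors in `ℓ²(G)`. -/
def ReiterAmenable (G : Type*) [Group G] : Prop :=
  ∀ (F : Finset G) (ε : ℝ), 0 < ε →
    ∃ ξ : G → ℝ, Summable (fun x => ξ x ^ 2) ∧ (∑' x, ξ x ^ 2) = 1 ∧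
      ∀ g ∈ F, (∑' x, (ξ (g⁻¹ * x) - ξ x) ^ 2) ≤ ε ^ 2

/-- The Schreier metric on the coset space `G ⧸ H` with respect to a (symmetric) set `S`:
the least `m` such that `y = s_m ⋯ s_1 • x` with all `s_i ∈ S`. -/
noncomputable def schreierDist {G : Type*} [Group G] (S : Set G) (H : Subgroup G)
    (x y : G ⧸ H) : ℝ :=
  sInf {r : ℝ | ∃ m : ℕ, r = m ∧ ∃ w : Fin m → G, (∀ i, w i ∈ S) ∧
    (List.ofFn w).prod • x = y}

/-- The word length with respect to a generating set `S` (closed under inverses). -/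
noncomputable def wordLength {G : Type*} [Group G] (S : Set G) (g : G) : ℝ :=
  sInf {r : ℝ | ∃ m : ℕ, r = m ∧ ∃ w : Fin m → G, (∀ i, w i ∈ S) ∧
    (List.ofFn w).prod = g}

/-- The Cheeger constant of a finite `G`-set `V` with respect to `S ⊆ G`:
`min {|∂_S A| / |A| : A ⊆ V nonempty, 2|A| ≤ |V|}`, where
`∂_S A = {(v, s) ∈ A × S : s • v ∉ A}`. -/
noncomputable def cheegerConst {G : Type*} [Group G] (S : Finset G)
    (V : Type*) [MulAction G V] : ℝ :=
  sInf {r : ℝ | ∃ A : Set V, A.Nonempty ∧ 2 * A.ncard ≤ Nat.card V ∧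
    r = (Set.ncard {p : V × G | p.1 ∈ A ∧ p.2 ∈ (S : Set G) ∧ p.2 • p.1 ∉ A} : ℝ) / A.ncard}

/-- Equi-exactness (uniform exactness) of a family of spaces: uniformly bounded,
uniformly Lipschitz partitions of unity. -/
def EquiExact {J : Type*} (X : J → Type*) (d : ∀ j, X j → X j → ℝ) : Prop :=
  ∀ R > (0:ℝ), ∀ ε > (0:ℝ), ∃ C > (0:ℝ), ∀ j, ∃ (I : Type) (φ : I → X j → ℝ),
    (∀ i x, 0 ≤ φ i x ∧ φ i x ≤ 1) ∧
    (∀ x, HasSum (fun i => φ i x) 1) ∧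
    (∀ x y, d j x y ≤ R → ∃ s ≤ ε, HasSum (fun i => |φ i x - φ i y|) s) ∧
    (∀ i x y, φ i x ≠ 0 → φ i y ≠ 0 → d j x y ≤ C)

/-- The distance between `N`-orbits in `X`: `d(N·x, N·y) = inf {d(h•x, h'•y) : h, h' ∈ N}`. -/
noncomputable def orbDist {G X : Type*} [Group G] [MulAction G X] [MetricSpace X]
    (N : Subgroup G) (x y : X) : ℝ :=
  sInf {r : ℝ | ∃ h h' : G, h ∈ N ∧ h' ∈ N ∧ dist (h • x) (h' • y) = r}

/-!
Since `N` is normal, the representatives of `gN` are the elements `k * g` with `k ∈ N`, and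
`(k * g) • x₀ = k • (g • x₀)`. So the quotient distance of `gN, hN` and the orbit distance of
`g • x₀, h • x₀` are infima over the same pairs `(a, b) = (k * g, k' * h)`, of `ℓ (a⁻¹ * b)` and of
`dist (a • x₀) (b • x₀)`. The lower control passes to the infima by monotonicity; the upper one
does after shifting its argument by `1`, evaluating it at a pair within `1` of the infimum.
-/

section

variable {G X : Type*} [Group G]

lemma exists_mem_eq_mul_of_mk_eq {N : Subgroup G} [N.Normal] {a b : G}
    (hab : (a : G ⧸ N) = b) : ∃ k ∈ N, a = k * b :=
  ⟨a / b, QuotientGroup.eq_iff_div_mem.mp hab, (div_mul_cancel a b).symm⟩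

lemma mk_mul_eq_of_mem {N : Subgroup G} [N.Normal] {k : G} (hk : k ∈ N) (a : G) :
    ((k * a : G) : G ⧸ N) = a := by
  rw [QuotientGroup.mk_mul, (QuotientGroup.eq_one_iff k).mpr hk, one_mul]

lemma quotDist_le {ℓ : G → ℝ} (hℓ : ∀ g, 0 ≤ ℓ g) (N : Subgroup G) (a b : G) :
    quotDist ℓ N a b ≤ ℓ (a⁻¹ * b) :=
  csInf_le ⟨0, by rintro r ⟨-, -, -, -, rfl⟩; exact hℓ _⟩ ⟨a, b, rfl, rfl, rfl⟩

lemma exists_lt_quotDist_add_one (ℓ : G → ℝ) (N : Subgroup G) (x y : G ⧸ N) :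
    ∃ a b : G, (a : G ⧸ N) = x ∧ (b : G ⧸ N) = y ∧ ℓ (a⁻¹ * b) < quotDist ℓ N x y + 1 := by
  obtain ⟨g, rfl⟩ := QuotientGroup.mk_surjective x
  obtain ⟨h, rfl⟩ := QuotientGroup.mk_surjective y
  have hne : {r : ℝ | ∃ a b : G, (a : G ⧸ N) = g ∧ (b : G ⧸ N) = h ∧ ℓ (a⁻¹ * b) = r}.Nonempty :=
    ⟨ℓ (g⁻¹ * h), g, h, rfl, rfl, rfl⟩
  obtain ⟨-, ⟨a, b, ha, hb, rfl⟩, hlt⟩ := Real.lt_sInf_add_pos hne one_pos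
  exact ⟨a, b, ha, hb, hlt⟩

variable [MetricSpace X] [MulAction G X]

lemma orbDist_le_dist (N : Subgroup G) (x y : X) {k k' : G} (hk : k ∈ N) (hk' : k' ∈ N) :
    orbDist N x y ≤ dist (k • x) (k' • y) :=
  csInf_le ⟨0, by rintro r ⟨-, -, -, -, rfl⟩; exact dist_nonneg⟩ ⟨k, k', hk, hk', rfl⟩

lemma le_orbDist (N : Subgroup G) (x y : X) {c : ℝ}
    (hc : ∀ k ∈ N, ∀ k' ∈ N, c ≤ dist (k • x) (k' • y)) : c ≤ orbDist N x y :=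
  le_csInf ⟨_, 1, 1, N.one_mem, N.one_mem, rfl⟩ <| by
    rintro r ⟨k, k', hk, hk', rfl⟩
    exact hc k hk k' hk'

variable {ℓ : G → ℝ} {N : Subgroup G} [N.Normal] {x₀ : X} {ρ : ℝ → ℝ}

lemma le_orbDist_of_le_dist (hℓ : ∀ g, 0 ≤ ℓ g) (hρ : Monotone ρ)
    (hlower : ∀ a b : G, ρ (ℓ (a⁻¹ * b)) ≤ dist (a • x₀) (b • x₀)) (g h : G) :
    ρ (quotDist ℓ N g h) ≤ orbDist N (g • x₀) (h • x₀) := by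
  refine le_orbDist N _ _ fun k hk k' hk' => ?_
  calc ρ (quotDist ℓ N g h)
      ≤ ρ (ℓ ((k * g)⁻¹ * (k' * h))) := by
        rw [← mk_mul_eq_of_mem hk g, ← mk_mul_eq_of_mem hk' h]
        exact hρ (quotDist_le hℓ N _ _)
    _ ≤ dist ((k * g) • x₀) ((k' * h) • x₀) := hlower _ _
    _ = dist (k • g • x₀) (k' • h • x₀) := by rw [mul_smul, mul_smul]

lemma orbDist_le_of_dist_le (hρ : Monotone ρ)
    (hupper : ∀ a b : G, dist (a • x₀) (b • x₀) ≤ ρ (ℓ (a⁻¹ * b))) (g h : G) :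
    orbDist N (g • x₀) (h • x₀) ≤ ρ (quotDist ℓ N g h + 1) := by
  obtain ⟨a, b, ha, hb, hlt⟩ := exists_lt_quotDist_add_one ℓ N g h
  obtain ⟨k, hk, rfl⟩ := exists_mem_eq_mul_of_mk_eq ha
  obtain ⟨k', hk', rfl⟩ := exists_mem_eq_mul_of_mk_eq hb
  calc orbDist N (g • x₀) (h • x₀)
      ≤ dist (k • g • x₀) (k' • h • x₀) := orbDist_le_dist N _ _ hk hk'
    _ = dist ((k * g) • x₀) ((k' * h) • x₀) := by rw [mul_smul, mul_smul]
    _ ≤ ρ (ℓ ((k * g)⁻¹ * (k' * h))) := hupper _ _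
    _ ≤ ρ (quotDist ℓ N g h + 1) := hρ hlt.le

end

theorem statement5_general {G X : Type*} [Group G] [MetricSpace X] [MulAction G X]
    (ℓ : G → ℝ) (hℓ : IsProperLength ℓ)
    (x₀ : X) (ρm ρp : ℝ → ℝ) (hρm : Monotone ρm) (hρp : Monotone ρp)
    (hρmt : Filter.Tendsto ρm Filter.atTop Filter.atTop)
    (hce : ∀ g h : G, ρm (ℓ (g⁻¹ * h)) ≤ dist (g • x₀) (h • x₀) ∧
      dist (g • x₀) (h • x₀) ≤ ρp (ℓ (g⁻¹ * h)))
    (N : ℕ → Subgroup G) (hN : ∀ n, (N n).Normal) :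
    ∃ ρm' ρp' : ℝ → ℝ, Monotone ρm' ∧ Monotone ρp' ∧
      Filter.Tendsto ρm' Filter.atTop Filter.atTop ∧
      ∀ (n : ℕ) (g h : G),
        ρm' (quotDist ℓ (N n) (QuotientGroup.mk g) (QuotientGroup.mk h)) ≤
            orbDist (N n) (g • x₀) (h • x₀) ∧
          orbDist (N n) (g • x₀) (h • x₀) ≤
            ρp' (quotDist ℓ (N n) (QuotientGroup.mk g) (QuotientGroup.mk h)) := by
  refine ⟨ρm, fun t => ρp (t + 1), hρm, fun _ _ hst => hρp (by linarith), hρmt,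
    fun n g h => ?_⟩
  have := hN n
  exact ⟨le_orbDist_of_le_dist hℓ.1.nonneg hρm (fun a b => (hce a b).1) g h,
    orbDist_le_of_dist_le hρp (fun a b => (hce a b).2) g h⟩

/-- A `G`-equivariant coarse embedding `g ↦ g • x₀` of `(G, ℓ)` into a
proper metric space with a free, properly discontinuous, isometric `G`-action descends,
uniformly in `n`, to coarse embeddings of the quotients `G ⧸ N_n` into the orbit spaces
`X / N_n`. -/
theorem statement5 {G X : Type*} [Group G] [MetricSpace X] [ProperSpace X] [MulAction G X]
    (ℓ : G → ℝ) (hℓ : IsProperLength ℓ)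
    (hiso : ∀ g : G, Isometry (fun x : X => g • x))
    (hfree : ∀ (g : G) (x : X), g • x = x → g = 1)
    (hpd : ∀ B : Set X, Bornology.IsBounded B →
      {g : G | ((g • ·) '' B ∩ B).Nonempty}.Finite)
    (x₀ : X) (ρm ρp : ℝ → ℝ) (hρm : Monotone ρm) (hρp : Monotone ρp)
    (hρmt : Filter.Tendsto ρm Filter.atTop Filter.atTop)
    (hce : ∀ g h : G, ρm (ℓ (g⁻¹ * h)) ≤ dist (g • x₀) (h • x₀) ∧
      dist (g • x₀) (h • x₀) ≤ ρp (ℓ (g⁻¹ * h)))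
    (N : ℕ → Subgroup G) (hN : ∀ n, (N n).Normal) (hNint : (⨅ n, N n) = ⊥) :
    ∃ ρm' ρp' : ℝ → ℝ, Monotone ρm' ∧ Monotone ρp' ∧
      Filter.Tendsto ρm' Filter.atTop Filter.atTop ∧
      ∀ (n : ℕ) (g h : G),
        ρm' (quotDist ℓ (N n) (QuotientGroup.mk g) (QuotientGroup.mk h)) ≤
            orbDist (N n) (g • x₀) (h • x₀) ∧
          orbDist (N n) (g • x₀) (h • x₀) ≤
            ρp' (quotDist ℓ (N n) (QuotientGroup.mk g) (QuotientGroup.mk h)) :=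
  statement5_general ℓ hℓ x₀ ρm ρp hρm hρp hρmt hce N hN
end

section
/- Let G be a group, let ℓ₁ and ℓ₂ be two proper length functions on G, and let (N_n)_{n∈ℕ} be a sequence of finite-index normal subgroups of G with trivial intersection. Then there exist nondecreasing functions ρ₋, ρ₊ : [0,∞) → [0,∞) with ρ₋(t) → ∞, depending only on ℓ₁ and ℓ₂ (not on n), such that for every n and every coset ḡ ∈ G/N_n, ρ₋(ℓ̄₁(ḡ)) ≤ ℓ̄₂(ḡ) ≤ ρ₊(ℓ̄₁(ḡ)), where ℓ̄ᵢ denotes the quotient length on G/N_n induced by ℓᵢ. In particular the two box space metric structures are coarsely equivalent. -/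
/-!
Compare the two lengths through the control functions
`ρ₋(t) = inf {ℓ₂ g : ℓ₁ g ≥ t}` and `ρ₊(t) = sup {ℓ₂ g : ℓ₁ g ≤ t}`, which involve only `G`.
Properness of `ℓ₂` makes `ρ₋` tend to infinity, and properness of `ℓ₁` makes `ρ₊` finite.
Every representative `g` of a coset `x` has `ℓ₁ g ≥ ℓ̄₁ x`, whence `ρ₋(ℓ̄₁ x) ≤ ℓ̄₂ x`; and since
`ℓ₁` has finite balls the infimum `ℓ̄₁ x` is attained by some representative `g`, so
`ℓ̄₂ x ≤ ℓ₂ g ≤ ρ₊(ℓ̄₁ x)`.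
-/

section ControlFunctions

variable {X : Type*} (f₁ f₂ : X → ℝ)

/-- The extra value `t` keeps the infimum from being the junk value `sInf ∅ = 0` when no
point has `f₁ ≥ t`. -/
noncomputable def lowerControl (t : ℝ) : ℝ :=
  sInf (f₂ '' {x | t ≤ f₁ x} ∪ {t})

noncomputable def upperControl (t : ℝ) : ℝ :=
  sSup (f₂ '' {x | f₁ x ≤ t} ∪ {0})

variable {f₁ f₂}

lemma bddBelow_lowerControl_set (hf₂ : ∀ x, 0 ≤ f₂ x) (t : ℝ) :
    BddBelow (f₂ '' {x | t ≤ f₁ x} ∪ {t}) := by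
  refine ⟨min 0 t, ?_⟩
  rintro r (⟨x, -, rfl⟩ | rfl)
  · exact (min_le_left _ _).trans (hf₂ x)
  · exact min_le_right _ _

lemma lowerControl_le (hf₂ : ∀ x, 0 ≤ f₂ x) {t : ℝ} {x : X} (hx : t ≤ f₁ x) :
    lowerControl f₁ f₂ t ≤ f₂ x :=
  csInf_le (bddBelow_lowerControl_set hf₂ t) (Or.inl ⟨x, hx, rfl⟩)

lemma lowerControl_monotone (hf₂ : ∀ x, 0 ≤ f₂ x) : Monotone (lowerControl f₁ f₂) := by
  intro s t hst
  refine le_csInf ⟨t, Or.inr rfl⟩ ?_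
  rintro r (⟨x, hx, rfl⟩ | rfl)
  · exact lowerControl_le hf₂ (hst.trans hx)
  · exact (csInf_le (bddBelow_lowerControl_set hf₂ s) (Or.inr rfl)).trans hst

lemma tendsto_lowerControl (hf₂_fin : ∀ R, {x | f₂ x ≤ R}.Finite) :
    Filter.Tendsto (lowerControl f₁ f₂) Filter.atTop Filter.atTop := by
  refine Filter.tendsto_atTop_atTop.2 fun M => ?_
  -- beyond the largest value of `f₁` on the finite set `{f₂ ≤ M}`, every point has `f₂ > M`
  obtain ⟨T, hT⟩ := ((hf₂_fin M).image f₁).bddAbove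
  refine ⟨max (T + 1) M, fun t ht => le_csInf ⟨t, Or.inr rfl⟩ ?_⟩
  rintro r (⟨x, hx, rfl⟩ | rfl)
  · by_contra! hlt
    have hxT : f₁ x ≤ T := hT ⟨x, hlt.le, rfl⟩
    linarith [le_max_left (T + 1) M, show t ≤ f₁ x from hx]
  · exact (le_max_right _ _).trans ht

lemma finite_upperControl_set (hf₁_fin : ∀ R, {x | f₁ x ≤ R}.Finite) (t : ℝ) :
    (f₂ '' {x | f₁ x ≤ t} ∪ {0}).Finite :=
  ((hf₁_fin t).image f₂).union (Set.finite_singleton 0)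

lemma le_upperControl (hf₁_fin : ∀ R, {x | f₁ x ≤ R}.Finite) {t : ℝ} {x : X}
    (hx : f₁ x ≤ t) : f₂ x ≤ upperControl f₁ f₂ t :=
  le_csSup (finite_upperControl_set hf₁_fin t).bddAbove (Or.inl ⟨x, hx, rfl⟩)

lemma upperControl_monotone (hf₁_fin : ∀ R, {x | f₁ x ≤ R}.Finite) :
    Monotone (upperControl f₁ f₂) := by
  intro s t hst
  refine csSup_le_csSup (finite_upperControl_set hf₁_fin t).bddAbove ⟨0, Or.inr rfl⟩ ?_
  rintro r (⟨x, hx, rfl⟩ | rfl)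
  · exact Or.inl ⟨x, (hx : f₁ x ≤ s).trans hst, rfl⟩
  · exact Or.inr rfl

end ControlFunctions

section QuotLength

variable {G : Type*} [Group G] {ℓ : G → ℝ} {N : Subgroup G}

lemma quotLength_mk_le (hℓ : ∀ g, 0 ≤ ℓ g) (g : G) : quotLength ℓ N g ≤ ℓ g :=
  csInf_le ⟨0, by rintro r ⟨g, -, rfl⟩; exact hℓ g⟩ ⟨g, rfl, rfl⟩

lemma le_quotLength {x : G ⧸ N} {b : ℝ} (hb : ∀ g : G, (g : G ⧸ N) = x → b ≤ ℓ g) :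
    b ≤ quotLength ℓ N x := by
  obtain ⟨g₀, rfl⟩ := QuotientGroup.mk_surjective x
  exact le_csInf ⟨ℓ g₀, g₀, rfl, rfl⟩ (by rintro r ⟨g, hg, rfl⟩; exact hb g hg)

lemma exists_mk_eq_and_eq_quotLength (hℓ : ∀ g, 0 ≤ ℓ g)
    (hℓ_fin : ∀ R, {g | ℓ g ≤ R}.Finite) (x : G ⧸ N) :
    ∃ g : G, (g : G ⧸ N) = x ∧ ℓ g = quotLength ℓ N x := by
  obtain ⟨g₀, rfl⟩ := QuotientGroup.mk_surjective x
  have hfin : {g : G | (g : G ⧸ N) = g₀ ∧ ℓ g ≤ ℓ g₀}.Finite :=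
    (hℓ_fin (ℓ g₀)).subset fun _ hg => hg.2
  obtain ⟨g, ⟨hg, hgg₀⟩, hmin⟩ := Set.exists_min_image _ ℓ hfin ⟨g₀, rfl, le_rfl⟩
  refine ⟨g, hg, le_antisymm (le_quotLength fun g' hg' => ?_) (hg ▸ quotLength_mk_le hℓ g)⟩
  rcases le_total (ℓ g') (ℓ g₀) with h | h
  · exact hmin g' ⟨hg', h⟩
  · exact hgg₀.trans h

end QuotLength

theorem statement6_general {G : Type*} [Group G] (ℓ₁ ℓ₂ : G → ℝ)
    (h₁ : IsProperLength ℓ₁) (h₂ : IsProperLength ℓ₂)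
    (N : ℕ → Subgroup G) :
    ∃ ρm ρp : ℝ → ℝ, Monotone ρm ∧ Monotone ρp ∧
      Filter.Tendsto ρm Filter.atTop Filter.atTop ∧
      ∀ (n : ℕ) (x : G ⧸ N n),
        ρm (quotLength ℓ₁ (N n) x) ≤ quotLength ℓ₂ (N n) x ∧
        quotLength ℓ₂ (N n) x ≤ ρp (quotLength ℓ₁ (N n) x) := by
  obtain ⟨⟨hnn₁, -⟩, hfin₁⟩ := h₁
  obtain ⟨⟨hnn₂, -⟩, hfin₂⟩ := h₂
  refine ⟨lowerControl ℓ₁ ℓ₂, upperControl ℓ₁ ℓ₂, lowerControl_monotone hnn₂,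
    upperControl_monotone hfin₁, tendsto_lowerControl hfin₂, fun n x => ⟨?_, ?_⟩⟩
  · exact le_quotLength fun g hg => lowerControl_le hnn₂ (hg ▸ quotLength_mk_le hnn₁ g)
  · obtain ⟨g, rfl, hg⟩ := exists_mk_eq_and_eq_quotLength hnn₁ hfin₁ x
    exact (quotLength_mk_le hnn₂ g).trans (le_upperControl hfin₁ hg.le)

/-- Two proper length functions on `G` induce, uniformly in `n`, coarsely
equivalent quotient lengths on the quotients `G ⧸ N_n` of a box space. -/
theorem statement6 {G : Type*} [Group G] (ℓ₁ ℓ₂ : G → ℝ)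
    (h₁ : IsProperLength ℓ₁) (h₂ : IsProperLength ℓ₂)
    (N : ℕ → Subgroup G) (hN : ∀ n, (N n).Normal)
    (hNfi : ∀ n, (N n).FiniteIndex) (hNint : (⨅ n, N n) = ⊥) :
    ∃ ρm ρp : ℝ → ℝ, Monotone ρm ∧ Monotone ρp ∧
      Filter.Tendsto ρm Filter.atTop Filter.atTop ∧
      ∀ (n : ℕ) (x : G ⧸ N n),
        ρm (quotLength ℓ₁ (N n) x) ≤ quotLength ℓ₂ (N n) x ∧
        quotLength ℓ₂ (N n) x ≤ ρp (quotLength ℓ₁ (N n) x) :=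
  statement6_general ℓ₁ ℓ₂ h₁ h₂ N
end

section
/- Let A and B be groups and let π : A ∗ B → Q be a surjective group homomorphism. Set K_A = ker(π ∘ ι_A) ⊴ A and K_B = ker(π ∘ ι_B) ⊴ B, and let q : A ∗ B → (A/K_A) ∗ (B/K_B) be the homomorphism induced by the two quotient maps. Then there is a unique homomorphism π̄ : (A/K_A) ∗ (B/K_B) → Q with π̄ ∘ q = π; this π̄ is surjective and restricts injectively to the canonical copies of A/K_A and B/K_B; the kernel of π̄ is a free group; and if Q is finite, then A/K_A and B/K_B are finite groups and ker(π̄) is a free group of finite rank (in particular finitely generated). -/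
/-!
Write `G = (A/K_A) ∗ (B/K_B)` and `N = ker π̄`. Because `π̄` is injective on both factors, each
factor acts freely on `G ⧸ N`, so each of its orbits is a torsor. Choosing a representative `r` of
every `A`-orbit and every `B`-orbit, the arrows `r ⟶ a • r` (`a ≠ 1`) and `r ⟶ b • r` (`b ≠ 1`)
then freely generate the action groupoid of `G` on `G ⧸ N`: labels on them determine a labelling
of every arrow `s ⟶ a • s` by a cocycle (go back to the representative of `s` first), hence a pair
of homomorphisms `A, B → (G ⧸ N → X) ⋊ G`, i.e. a functor to `X`. The vertex group of this
connected free groupoid at the base point is `N`, which is therefore free by Nielsen–Schreier for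
groupoids. If `Q` is finite, `N` has finite index in the finitely generated group `G`, so it is
finitely generated by Schreier's lemma.
-/

open CategoryTheory

noncomputable section

namespace MonoidHom

section OrbitCoordinates

variable {G H S : Type*} [Group G] [Group H] [MulAction G S] (j : H →* G)

def orbitSetoid : Setoid S where
  r s t := ∃ h, j h • s = t
  iseqv :=
    ⟨fun s => ⟨1, by simp⟩, fun ⟨h, hst⟩ => ⟨h⁻¹, by simp [← hst]⟩,
      fun ⟨h, hst⟩ ⟨h', htu⟩ => ⟨h' * h, by simp [mul_smul, hst, htu]⟩⟩

def orbitRep (s : S) : S := (Quotient.mk j.orbitSetoid s).out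

lemma exists_smul_orbitRep (s : S) : ∃ h, j h • j.orbitRep s = s :=
  Quotient.mk_out (s := j.orbitSetoid) s

lemma orbitRep_smul (h : H) (s : S) : j.orbitRep (j h • s) = j.orbitRep s :=
  congrArg Quotient.out (Quotient.sound (s := j.orbitSetoid) (a := s) ⟨h, rfl⟩).symm

lemma orbitRep_orbitRep (s : S) : j.orbitRep (j.orbitRep s) = j.orbitRep s :=
  congrArg Quotient.out (Quotient.out_eq _)

def orbitCoord (s : S) : H := (j.exists_smul_orbitRep s).choose

lemma smul_orbitRep (s : S) : j (j.orbitCoord s) • j.orbitRep s = s :=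
  (j.exists_smul_orbitRep s).choose_spec

variable {j} (hfree : ∀ (h : H) (s : S), j h • s = s → h = 1)
include hfree

lemma eq_orbitCoord {s : S} {h : H} (hs : j h • j.orbitRep s = s) : h = j.orbitCoord s := by
  rw [← inv_mul_eq_one]
  refine hfree _ (j.orbitRep s) ?_
  rw [map_mul, mul_smul, smul_orbitRep, map_inv, inv_smul_eq_iff, hs]

lemma orbitCoord_smul (h : H) (s : S) : j.orbitCoord (j h • s) = h * j.orbitCoord s :=
  (eq_orbitCoord hfree (by rw [orbitRep_smul, map_mul, mul_smul, smul_orbitRep])).symm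

lemma orbitCoord_of_orbitRep_eq {s : S} (hs : j.orbitRep s = s) : j.orbitCoord s = 1 :=
  (eq_orbitCoord hfree (by rw [map_one, one_smul, hs])).symm

end OrbitCoordinates

section Cocycle

variable {G H S X : Type*} [Group G] [Group H] [MulAction G S] [Group X] (j : H →* G)
  (v : S → H → X)

/-- The label forced on the arrow `s ⟶ j h • s` when `v r h` labels the arrow `r ⟶ j h • r`
out of each orbit representative `r`. -/
def orbitCocycle (h : H) (s : S) : X :=
  v (j.orbitRep s) (h * j.orbitCoord s) * (v (j.orbitRep s) (j.orbitCoord s))⁻¹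

lemma orbitCocycle_one (s : S) : j.orbitCocycle v 1 s = 1 := by
  rw [orbitCocycle, one_mul, mul_inv_cancel]

variable {j} (hfree : ∀ (h : H) (s : S), j h • s = s → h = 1)
include hfree

lemma orbitCocycle_mul (h h' : H) (s : S) :
    j.orbitCocycle v (h * h') s = j.orbitCocycle v h (j h' • s) * j.orbitCocycle v h' s := by
  simp only [orbitCocycle, orbitRep_smul, orbitCoord_smul hfree, mul_assoc, inv_mul_cancel_left]

lemma orbitCocycle_of_orbitRep_eq {r : S} (hr : j.orbitRep r = r) (hv : v r 1 = 1) (h : H) :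
    j.orbitCocycle v h r = v r h := by
  rw [orbitCocycle, orbitCoord_of_orbitRep_eq hfree hr, hr, mul_one, hv, inv_one, mul_one]

def semidirectLift : H →* (S → X) ⋊[mulAutArrow] G where
  toFun h := ⟨fun t => j.orbitCocycle v h ((j h)⁻¹ • t), j h⟩
  map_one' := SemidirectProduct.ext (funext fun _ => orbitCocycle_one j v _) (map_one j)
  map_mul' h h' := SemidirectProduct.ext (funext fun t => by
      change j.orbitCocycle v (h * h') ((j (h * h'))⁻¹ • t) =
        j.orbitCocycle v h ((j h)⁻¹ • t) * j.orbitCocycle v h' ((j h')⁻¹ • (j h)⁻¹ • t)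
      rw [orbitCocycle_mul v hfree, map_mul, mul_inv_rev, mul_smul, smul_inv_smul])
    (map_mul j h h')

end Cocycle

end MonoidHom

namespace CategoryTheory.ActionCategory

section FactorGenerators

variable {G H S X : Type*} [Group G] [Group H] [MulAction G S] [Group X] (j : H →* G)

def FactorGen (x y : ActionCategory G S) : Type _ :=
  {h : H // j.orbitRep x.back = x.back ∧ h ≠ 1 ∧ j h • x.back = y.back}

def homMk {s t : S} (g : G) (e : g • s = t) : objEquiv G S s ⟶ objEquiv G S t :=
  Subtype.mk g e

variable {j} in
def FactorGen.toHom {x y : ActionCategory G S} (e : FactorGen j x y) : x ⟶ y :=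
  ⟨j e.1, e.2.2.2⟩

variable (f : ∀ x y : ActionCategory G S, FactorGen j x y → X)

open scoped Classical in
def factorLabel (r : S) (h : H) : X :=
  if hr : j.orbitRep r = r ∧ h ≠ 1 then f r ↑(j h • r) ⟨h, hr.1, hr.2, rfl⟩ else 1

lemma factorLabel_one (r : S) : factorLabel j f r 1 = 1 :=
  dif_neg fun hr => hr.2 rfl

lemma factorLabel_factorGen {x y : ActionCategory G S} (e : FactorGen j x y) :
    factorLabel j f x.back e.1 = f x y e := by
  obtain ⟨⟨⟩, s : S⟩ := x
  obtain ⟨⟨⟩, t : S⟩ := y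
  obtain ⟨h, hr, hne, e : j h • s = t⟩ := e
  subst e
  exact dif_pos ⟨hr, hne⟩

variable {j}

lemma map_homMk_eq_factorLabel (E : ActionCategory G S ⥤ SingleObj X)
    (hE : ∀ x y (e : FactorGen j x y), E.map e.toHom = f x y e)
    (r t : S) (h : H) (e : j h • r = t) (hr : j.orbitRep r = r) :
    E.map (homMk (j h) e) = factorLabel j f r h := by
  by_cases hne : h = 1
  · subst hne
    obtain rfl : r = t := by simpa using e
    have hid : homMk (j 1) e = 𝟙 _ := Subtype.ext (map_one j)
    rw [factorLabel_one, hid, E.map_id]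
    rfl
  · exact (hE (objEquiv G S r) (objEquiv G S t) ⟨h, hr, hne, e⟩).trans
      (factorLabel_factorGen j f _).symm

variable {v : S → H → X}

lemma semidirectLift_left_smul (hfree : ∀ (h : H) (s : S), j h • s = s → h = 1) {r : S}
    (hr : j.orbitRep r = r) (hv : v r 1 = 1) (h : H) :
    (j.semidirectLift v hfree h).left (j h • r) = v r h := by
  change j.orbitCocycle v h ((j h)⁻¹ • j h • r) = v r h
  rw [inv_smul_smul, MonoidHom.orbitCocycle_of_orbitRep_eq v hfree hr hv]

lemma uncurry_map_toHom (hfree : ∀ (h : H) (s : S), j h • s = s → h = 1)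
    (Φ : G →* (S → X) ⋊[mulAutArrow] G) (hΦ : ∀ g, (Φ g).right = g)
    (hj : Φ.comp j = j.semidirectLift (factorLabel j f) hfree)
    {x y : ActionCategory G S} (e : FactorGen j x y) :
    (uncurry Φ hΦ).map e.toHom = f x y e := by
  obtain ⟨⟨⟩, s : S⟩ := x
  obtain ⟨⟨⟩, t : S⟩ := y
  obtain ⟨h, hr : j.orbitRep s = s, hne, e : j h • s = t⟩ := e
  subst e
  change (Φ (j h)).left (j h • s) = _
  rw [← MonoidHom.comp_apply, hj, semidirectLift_left_smul hfree hr (factorLabel_one j f s)]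
  exact factorLabel_factorGen j f (x := objEquiv G S s) (y := objEquiv G S (j h • s))
    ⟨h, hr, hne, rfl⟩

variable (E : ActionCategory G S ⥤ SingleObj X)
  (hE : ∀ (r t : S) (h : H) (e : j h • r = t), j.orbitRep r = r →
    E.map (homMk (j h) e) = v r h)
include hE

/-- An arrow out of `s` is the arrow out of its orbit representative, composed with the
inverse of the arrow from the representative to `s`. -/
lemma map_eq_orbitCocycle (s t : S) (h : H) (e : j h • s = t) :
    E.map (homMk (j h) e) = j.orbitCocycle v h s := by
  set r := j.orbitRep s
  set c := j.orbitCoord s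
  have hrs : j c • r = s := j.smul_orbitRep s
  have hrt : j (h * c) • r = t := by rw [map_mul, mul_smul, hrs, e]
  have hr : j.orbitRep r = r := j.orbitRep_orbitRep s
  have hcomp : homMk (j c) hrs ≫ homMk (j h) e = homMk (j (h * c)) hrt :=
    Subtype.ext (map_mul j h c).symm
  have hmap := congrArg E.map hcomp
  rw [E.map_comp, SingleObj.comp_as_mul, hE _ _ _ _ hr, hE _ _ _ _ hr] at hmap
  exact eq_mul_inv_of_mul_eq hmap

lemma curry_comp_eq_semidirectLift (hfree : ∀ (h : H) (s : S), j h • s = s → h = 1) :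
    (curry E).comp j = j.semidirectLift v hfree :=
  MonoidHom.ext fun h => SemidirectProduct.ext
    (funext fun t => map_eq_orbitCocycle E hE _ t h (smul_inv_smul _ _)) rfl

end FactorGenerators

end CategoryTheory.ActionCategory

namespace Monoid.Coprod

open CategoryTheory ActionCategory

variable {A B S : Type*} [Group A] [Group B] [MulAction (A ∗ B) S]

lemma curry_eq_lift_semidirectLift {X : Type*} [Group X]
    (hA : ∀ (a : A) (s : S), (inl a : A ∗ B) • s = s → a = 1)
    (hB : ∀ (b : B) (s : S), (inr b : A ∗ B) • s = s → b = 1)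
    (f : ∀ x y : ActionCategory (A ∗ B) S, FactorGen inl x y ⊕ FactorGen inr x y → X)
    (E : ActionCategory (A ∗ B) S ⥤ SingleObj X)
    (hE : ∀ x y e, E.map (Sum.elim FactorGen.toHom FactorGen.toHom e) = f x y e) :
    curry E = lift
      ((inl : A →* A ∗ B).semidirectLift (factorLabel _ fun x y e => f x y (.inl e)) hA)
      ((inr : B →* A ∗ B).semidirectLift (factorLabel _ fun x y e => f x y (.inr e)) hB) := by
  refine Coprod.hom_ext ?_ ?_
  · rw [lift_comp_inl]
    exact curry_comp_eq_semidirectLift E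
      (map_homMk_eq_factorLabel _ E fun x y e => hE x y (.inl e)) hA
  · rw [lift_comp_inr]
    exact curry_comp_eq_semidirectLift E
      (map_homMk_eq_factorLabel _ E fun x y e => hE x y (.inr e)) hB

@[reducible] def actionGroupoidIsFree
    (hA : ∀ (a : A) (s : S), (inl a : A ∗ B) • s = s → a = 1)
    (hB : ∀ (b : B) (s : S), (inr b : A ∗ B) • s = s → b = 1) :
    IsFreeGroupoid (ActionCategory (A ∗ B) S) where
  quiverGenerators := ⟨fun x y => FactorGen inl x y ⊕ FactorGen inr x y⟩
  of := Sum.elim FactorGen.toHom FactorGen.toHom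
  unique_lift := by
    intro X _ f
    set Φ := lift ((inl : A →* A ∗ B).semidirectLift (factorLabel _ fun x y e => f (.inl e)) hA)
      ((inr : B →* A ∗ B).semidirectLift (factorLabel _ fun x y e => f (.inr e)) hB)
    have hΦ : ∀ g, (Φ g).right = g := by
      have : SemidirectProduct.rightHom.comp Φ = MonoidHom.id (A ∗ B) :=
        Coprod.hom_ext (by ext; rfl) (by ext; rfl)
      exact DFunLike.congr_fun this
    refine ⟨uncurry Φ hΦ, ?_, fun E hE => ?_⟩
    · rintro x y (e | e)
      · exact uncurry_map_toHom _ hA Φ hΦ (lift_comp_inl _ _) e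
      · exact uncurry_map_toHom _ hB Φ hΦ (lift_comp_inr _ _) e
    · have hcurry : curry E = Φ := curry_eq_lift_semidirectLift hA hB (fun x y e => f e) E hE
      refine Functor.hext (fun _ => Unit.ext _ _) (ActionCategory.cases fun t g => ?_)
      clear_value Φ
      subst hcurry
      rfl

end Monoid.Coprod

lemma MonoidHom.eq_one_of_injective_comp_of_smul_eq {G H Q : Type*} [Group G] [Group H]
    [Group Q] (φ : G →* Q) {j : H →* G} (hj : Function.Injective (φ.comp j)) {h : H}
    {s : G ⧸ φ.ker} (hs : j h • s = s) : h = 1 := by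
  induction s using QuotientGroup.induction_on with
  | H x => exact hj (by simpa using congrArg (QuotientGroup.kerLift φ) hs)

namespace Monoid.Coprod

open CategoryTheory ActionCategory Function

variable {A B Q : Type*} [Group A] [Group B] [Group Q]

theorem isFreeGroup_ker (φ : A ∗ B →* Q) (hA : Injective (φ.comp inl))
    (hB : Injective (φ.comp inr)) : IsFreeGroup φ.ker := by
  let _ := actionGroupoidIsFree (S := (A ∗ B) ⧸ φ.ker)
    (fun _ _ => φ.eq_one_of_injective_comp_of_smul_eq hA)
    (fun _ _ => φ.eq_one_of_injective_comp_of_smul_eq hB)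
  let x := objEquiv (A ∗ B) ((A ∗ B) ⧸ φ.ker) ↑(1 : A ∗ B)
  let e := endMulEquivSubgroup φ.ker
  have hconn : IsConnected (ActionCategory (A ∗ B) ((A ∗ B) ⧸ φ.ker)) := inferInstance
  exact @IsFreeGroup.ofMulEquiv _ (End.group x)
    (@IsFreeGroupoid.endIsFreeOfConnectedFree _ _ hconn _ x) _ _
    (MulEquiv.mk' e.toEquiv fun a b => e.map_mul a b)

theorem map_surjective {M N M' N' : Type*} [Monoid M] [Monoid N] [Monoid M'] [Monoid N']
    {f : M →* M'} {g : N →* N'} (hf : Surjective f) (hg : Surjective g) :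
    Surjective (map f g) := by
  rw [← MonoidHom.mrange_eq_top, eq_top_iff, ← mclosure_range_inl_union_inr,
    Submonoid.closure_le]
  rintro _ (⟨m, rfl⟩ | ⟨n, rfl⟩)
  · obtain ⟨a, rfl⟩ := hf m
    exact ⟨inl a, map_apply_inl f g a⟩
  · obtain ⟨b, rfl⟩ := hg n
    exact ⟨inr b, map_apply_inr f g b⟩

instance fg [Group.FG A] [Group.FG B] : Group.FG (A ∗ B) := by
  have hinl : (inl : A →* A ∗ B).range.FG := (Group.fg_iff_subgroup_fg _).1 inferInstance
  have hinr : (inr : B →* A ∗ B).range.FG := (Group.fg_iff_subgroup_fg _).1 inferInstance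
  have htop := hinl.sup hinr
  rw [range_inl_sup_range_inr] at htop
  exact Group.fg_def.2 htop

theorem lift_kerLift_comp_map (π : A ∗ B →* Q) :
    (lift (QuotientGroup.kerLift (π.comp inl)) (QuotientGroup.kerLift (π.comp inr))).comp
      (map (QuotientGroup.mk' (π.comp inl).ker) (QuotientGroup.mk' (π.comp inr).ker)) = π :=
  hom_ext (MonoidHom.ext fun _ => by simp) (MonoidHom.ext fun _ => by simp)

end Monoid.Coprod

end

open Monoid Function in
/-- Normal form for quotients of a free product: a surjection
`π : A ∗ B ↠ Q` factors uniquely through `(A/K_A) ∗ (B/K_B)` via a surjection `π̄` which is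
injective on the canonical copies of `A/K_A`, `B/K_B`, whose kernel is a free group; if `Q`
is finite then `A/K_A`, `B/K_B` are finite and `ker π̄` is free of finite rank. -/
theorem statement9 {A B Q : Type*} [Group A] [Group B] [Group Q]
    (π : Monoid.Coprod A B →* Q) (hπ : Function.Surjective π) :
    ∃ πbar : Monoid.Coprod (A ⧸ (π.comp Monoid.Coprod.inl).ker)
        (B ⧸ (π.comp Monoid.Coprod.inr).ker) →* Q,
      πbar.comp (Monoid.Coprod.map
        (QuotientGroup.mk' (π.comp Monoid.Coprod.inl).ker)
        (QuotientGroup.mk' (π.comp Monoid.Coprod.inr).ker)) = π ∧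
      (∀ ψ : Monoid.Coprod (A ⧸ (π.comp Monoid.Coprod.inl).ker)
          (B ⧸ (π.comp Monoid.Coprod.inr).ker) →* Q,
        ψ.comp (Monoid.Coprod.map
          (QuotientGroup.mk' (π.comp Monoid.Coprod.inl).ker)
          (QuotientGroup.mk' (π.comp Monoid.Coprod.inr).ker)) = π → ψ = πbar) ∧
      Function.Surjective πbar ∧
      Function.Injective (πbar.comp Monoid.Coprod.inl) ∧
      Function.Injective (πbar.comp Monoid.Coprod.inr) ∧
      IsFreeGroup πbar.ker ∧
      (Finite Q → Finite (A ⧸ (π.comp Monoid.Coprod.inl).ker) ∧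
        Finite (B ⧸ (π.comp Monoid.Coprod.inr).ker) ∧ Group.FG πbar.ker) := by
  have hq : Surjective (Coprod.map (QuotientGroup.mk' (π.comp Coprod.inl).ker)
      (QuotientGroup.mk' (π.comp Coprod.inr).ker)) :=
    Coprod.map_surjective (QuotientGroup.mk'_surjective _) (QuotientGroup.mk'_surjective _)
  have hfac := Coprod.lift_kerLift_comp_map π
  set πbar := Coprod.lift (QuotientGroup.kerLift (π.comp Coprod.inl))
    (QuotientGroup.kerLift (π.comp Coprod.inr))
  have hinl : Injective (πbar.comp Coprod.inl) := by
    rw [Coprod.lift_comp_inl]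
    exact QuotientGroup.kerLift_injective _
  have hinr : Injective (πbar.comp Coprod.inr) := by
    rw [Coprod.lift_comp_inr]
    exact QuotientGroup.kerLift_injective _
  refine ⟨πbar, hfac, fun ψ hψ => (MonoidHom.cancel_right hq).1 (hψ.trans hfac.symm),
    Surjective.of_comp (hfac ▸ hπ : Surjective (πbar ∘ _)), hinl, hinr,
    Coprod.isFreeGroup_ker πbar hinl hinr,
    fun _ => ⟨Finite.of_injective _ hinl, Finite.of_injective _ hinr, inferInstance⟩⟩
end

section
/- Let A and B be groups, let p : A ∗ B → A × B be the canonical homomorphism determined by ι_A(a) ↦ (a,1) and ι_B(b) ↦ (1,b), and let D = ker p. Then the homomorphism from the free group on the set (A∖{1}) × (B∖{1}) to A ∗ B which sends the generator (a,b) to the commutator [ι_A(a), ι_B(b)] = ι_A(a)·ι_B(b)·ι_A(a)⁻¹·ι_B(b)⁻¹ is injective, and its image is exactly D. In particular, D is a free group with free basis {[ι_A(a), ι_B(b)] : a ∈ A∖{1}, b ∈ B∖{1}}. -/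
/-!
Let `φ` be the commutator map and write `c(a, b)` for the free generator `(a, b)` when `a ≠ 1` and
`b ≠ 1`, and `c(a, b) = 1` otherwise. Every element of `A ∗ B` can be written uniquely as
`φ(w) ι_A(a) ι_B(b)`. Both existence and uniqueness come from a right action of `A ∗ B` on the
triples `(w, a, b)` that models right multiplication: `ι_B(b')` replaces `b` by `b b'`, and
`ι_A(a')` replaces `(w, a, b)` by `(w c(a, b) c(a a', b)⁻¹, a a', b)`, because
`ι_A(a) ι_B(b) = [ι_A(a), ι_B(b)] ι_B(b) ι_A(a)`. Acting by `φ(w)` on `(1, 1, 1)` gives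
`(w, 1, 1)`, so `φ` is injective. An element `g` of the kernel sends `(1, 1, 1)` to a triple
`(w, a, b)` with `g = φ(w) ι_A(a) ι_B(b)`, and projecting to `A × B` forces `a = b = 1`.
-/

def Function.End.rightActionHom {M X : Type*} [Monoid M] (r : M → X → X)
    (one : ∀ x, r 1 x = x) (mul : ∀ m n x, r (m * n) x = r n (r m x)) :
    M →* (Function.End X)ᵐᵒᵖ where
  toFun m := MulOpposite.op (r m)
  map_one' := congrArg MulOpposite.op (funext one)
  map_mul' m n := congrArg MulOpposite.op (funext (mul m n))

namespace Monoid.Coprod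

open scoped commutatorElement

variable {A B : Type*} [Group A] [Group B]

abbrev CommutatorIndex (A B : Type*) [Group A] [Group B] := {q : A × B // q.1 ≠ 1 ∧ q.2 ≠ 1}

noncomputable def commutatorLift : FreeGroup (CommutatorIndex A B) →* A ∗ B :=
  FreeGroup.lift fun t => ⁅(inl t.1.1 : A ∗ B), (inr t.1.2 : A ∗ B)⁆

open Classical in
noncomputable def commutatorGen (a : A) (b : B) : FreeGroup (CommutatorIndex A B) :=
  if h : a ≠ 1 ∧ b ≠ 1 then FreeGroup.of ⟨(a, b), h⟩ else 1

@[simp] lemma commutatorGen_one_left (b : B) : commutatorGen (1 : A) b = 1 := by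
  simp [commutatorGen]

@[simp] lemma commutatorGen_one_right (a : A) : commutatorGen a (1 : B) = 1 := by
  simp [commutatorGen]

lemma commutatorLift_commutatorGen (a : A) (b : B) :
    commutatorLift (commutatorGen a b) = ⁅(inl a : A ∗ B), (inr b : A ∗ B)⁆ := by
  by_cases h : a ≠ 1 ∧ b ≠ 1
  · simp [commutatorGen, h, commutatorLift]
  · obtain rfl | rfl : a = 1 ∨ b = 1 := by tauto
    all_goals simp

lemma toProd_comp_commutatorLift :
    (toProd : A ∗ B →* A × B).comp commutatorLift = 1 :=
  FreeGroup.ext_hom _ _ fun t => by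
    ext <;> simp [commutatorLift, FreeGroup.lift_apply_of, commutatorElement_def]

abbrev NormalForm (A B : Type*) [Group A] [Group B] := FreeGroup (CommutatorIndex A B) × A × B

namespace NormalForm

noncomputable def eval (x : NormalForm A B) : A ∗ B := commutatorLift x.1 * inl x.2.1 * inr x.2.2

noncomputable def mulInl (a' : A) (x : NormalForm A B) : NormalForm A B :=
  (x.1 * commutatorGen x.2.1 x.2.2 * (commutatorGen (x.2.1 * a') x.2.2)⁻¹, x.2.1 * a', x.2.2)

def mulInr (b' : B) (x : NormalForm A B) : NormalForm A B := (x.1, x.2.1, x.2.2 * b')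

noncomputable def rightAction : A ∗ B →* (Function.End (NormalForm A B))ᵐᵒᵖ :=
  lift (Function.End.rightActionHom mulInl (fun x => by simp [mulInl])
      (fun _ _ x => by simp [mulInl, mul_assoc]))
    (Function.End.rightActionHom mulInr (fun x => by simp [mulInr])
      (fun _ _ x => by simp [mulInr, mul_assoc]))

noncomputable def act (x : NormalForm A B) (g : A ∗ B) : NormalForm A B :=
  (rightAction g).unop x

lemma act_mul (x : NormalForm A B) (g h : A ∗ B) : act x (g * h) = act (act x g) h := by
  rw [act, map_mul]
  rfl

@[simp] lemma act_one (x : NormalForm A B) : act x 1 = x := rfl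

@[simp] lemma act_inl (x : NormalForm A B) (a' : A) : act x (inl a') = mulInl a' x := rfl

@[simp] lemma act_inr (x : NormalForm A B) (b' : B) : act x (inr b') = mulInr b' x := rfl

lemma eval_act (x : NormalForm A B) (g : A ∗ B) : eval (act x g) = eval x * g := by
  induction g using induction_on generalizing x with
  | inl a' =>
    simp only [act_inl, eval, mulInl, map_mul, map_inv, commutatorLift_commutatorGen,
      commutatorElement_def]
    group
  | inr b' => simp [eval, mulInr, mul_assoc]
  | mul g h ihg ihh => rw [act_mul, ihh, ihg, mul_assoc]

lemma act_commutatorLift (w₀ w : FreeGroup (CommutatorIndex A B)) :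
    act (w₀, 1, 1) (commutatorLift w) = (w₀ * w, 1, 1) := by
  induction w using FreeGroup.induction_on generalizing w₀ with
  | C1 => simp
  | of t =>
    obtain ⟨⟨a, b⟩, ha, hb⟩ := t
    simp only [commutatorLift, FreeGroup.lift_apply_of, commutatorElement_def, ← map_inv, act_mul,
      act_inl, act_inr]
    simp [mulInl, mulInr, commutatorGen, ha, hb]
  | inv_of t ih =>
    -- acting by `commutatorLift t⁻¹` undoes acting by `commutatorLift t`
    calc act (w₀, 1, 1) (commutatorLift (FreeGroup.of t)⁻¹)
        = act (act (w₀ * (FreeGroup.of t)⁻¹, 1, 1) (commutatorLift (FreeGroup.of t)))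
            (commutatorLift (FreeGroup.of t)⁻¹) := by rw [ih, inv_mul_cancel_right]
      _ = (w₀ * (FreeGroup.of t)⁻¹, 1, 1) := by rw [← act_mul, ← map_mul, mul_inv_cancel,
            map_one, act_one]
  | mul w₁ w₂ ih₁ ih₂ => rw [map_mul, act_mul, ih₁, ih₂, mul_assoc]

end NormalForm

open NormalForm

lemma commutatorLift_injective :
    Function.Injective (commutatorLift : FreeGroup (CommutatorIndex A B) →* A ∗ B) :=
  Function.LeftInverse.injective (g := fun g => (act (1, 1, 1) g).1) fun w => by
    simp [act_commutatorLift]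

lemma range_commutatorLift :
    (commutatorLift : FreeGroup (CommutatorIndex A B) →* A ∗ B).range =
      (toProd : A ∗ B →* A × B).ker := by
  refine le_antisymm ((MonoidHom.range_le_ker_iff _ _).2 toProd_comp_commutatorLift) fun g hg => ?_
  have h_eval : eval (act (1, 1, 1) g) = g := by simpa [eval] using eval_act (1, 1, 1) g
  generalize act (1, 1, 1) g = x at h_eval
  obtain ⟨w, a, b⟩ := x
  subst h_eval
  obtain ⟨rfl, rfl⟩ : a = 1 ∧ b = 1 := by
    simpa [eval, ← MonoidHom.comp_apply, toProd_comp_commutatorLift] using hg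
  exact ⟨w, by simp [eval]⟩

end Monoid.Coprod

/-- The kernel `D` of the canonical map `A ∗ B → A × B` is a free group
with free basis the commutators `[ι_A(a), ι_B(b)]`, `a ≠ 1`, `b ≠ 1`: the homomorphism from
the free group on `(A∖{1}) × (B∖{1})` sending a generator to the corresponding commutator
is injective with image exactly `D`. -/
theorem statement10 {A B : Type*} [Group A] [Group B] :
    Function.Injective
      (FreeGroup.lift (fun t : {q : A × B // q.1 ≠ 1 ∧ q.2 ≠ 1} =>
        (Monoid.Coprod.inl : A →* Monoid.Coprod A B) t.1.1 *
          (Monoid.Coprod.inr : B →* Monoid.Coprod A B) t.1.2 *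
          ((Monoid.Coprod.inl : A →* Monoid.Coprod A B) t.1.1)⁻¹ *
          ((Monoid.Coprod.inr : B →* Monoid.Coprod A B) t.1.2)⁻¹)) ∧
    (FreeGroup.lift (fun t : {q : A × B // q.1 ≠ 1 ∧ q.2 ≠ 1} =>
        (Monoid.Coprod.inl : A →* Monoid.Coprod A B) t.1.1 *
          (Monoid.Coprod.inr : B →* Monoid.Coprod A B) t.1.2 *
          ((Monoid.Coprod.inl : A →* Monoid.Coprod A B) t.1.1)⁻¹ *
          ((Monoid.Coprod.inr : B →* Monoid.Coprod A B) t.1.2)⁻¹)).range =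
      (Monoid.Coprod.toProd : Monoid.Coprod A B →* A × B).ker :=
  ⟨Monoid.Coprod.commutatorLift_injective (A := A) (B := B), Monoid.Coprod.range_commutatorLift⟩
end

section
/- Let (X_n)_{n∈ℕ} and (Y_n)_{n∈ℕ} be sequences of metric spaces, let G be a group acting by isometries on every X_n and every Y_n, and let F_n : X_n → Y_n be G-equivariant 1-Lipschitz maps. Assume: (1) the sequence (Y_n) is equi-exact; (2) the actions on (Y_n) are uniformly cobounded, i.e. there is C > 0 such that for every n and all y, y' ∈ Y_n there is g ∈ G with d(g·y, y') ≤ C; (3) there are points y_n ∈ Y_n such that for every R ≥ 0 the sequence of subspaces (F_n⁻¹(closed ball B(y_n, R)))_{n∈ℕ}, with metrics inherited from X_n, coarsely embeds uniformly into Hilbert space (control functions may depend on R). Then the sequence (X_n) coarsely embeds uniformly into Hilbert space. -/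
/-!
Equi-exactness gives, at each scale `R`, a partition of unity `(φᵢ)` on `Yₙ` with small variation
at scale `R` and supports of uniformly bounded diameter. By coboundedness some `gᵢ ∈ G` moves the
support of `φᵢ` into a fixed ball around `yₙ`, so `x ↦ ψ (gᵢ • x)`, with `ψ` the embedding of the
preimage of that ball, coarsely embeds the support of `φᵢ ∘ Fₙ`. Composing with the feature map `γ`
of the Gaussian kernel `exp (-‖u - v‖² / 2)` turns these local embeddings into unit vectors, and
`ξ x = (√(φᵢ (Fₙ x)) • γ (c • ψ (gᵢ • x)))ᵢ` is a map into the unit sphere of `ℓ²` that moves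
little at scale `R` and sends far-apart points to vectors at distance at least `1`. The `ℓ²`-sum
of `ξₖ x - ξₖ x₀` over the scales `k + 1` with tolerances `2⁻ᵏ` is a uniform coarse embedding.
-/

open Filter
open scoped InnerProductSpace

theorem hasSum_fin_prod_pow {ι : Type*} {h : ι → ℝ} (hh : Summable fun i => |h i|) (n : ℕ) :
    HasSum (fun a : Fin n → ι => ∏ j, h (a j)) ((∑' i, h i) ^ n) := by
  induction n generalizing h with
  | zero => simp
  | succ n ih =>
    have habs : Summable fun a : Fin n → ι => ‖∏ j, h (a j)‖ := by
      simpa [Real.norm_eq_abs, Finset.abs_prod] using (ih (h := fun i => |h i|) (by simpa)).summable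
    have hnorm : Summable fun i => ‖h i‖ := by simpa only [Real.norm_eq_abs] using hh
    have hprod : Summable fun p : ι × (Fin n → ι) => h p.1 * ∏ j, h (p.2 j) :=
      summable_mul_of_summable_norm (f := h) (g := fun a : Fin n → ι => ∏ j, h (a j)) hnorm habs
    have hpair := hh.of_abs.hasSum.mul (ih hh) hprod
    have hcons : (fun a : Fin (n + 1) → ι => ∏ j, h (a j)) ∘ Fin.consEquiv (fun _ => ι) =
        fun p => h p.1 * ∏ j, h (p.2 j) := by
      ext p; simp [Fin.prod_univ_succ]
    rw [← (Fin.consEquiv fun _ => ι).hasSum_iff, hcons, pow_succ']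
    exact hpair

/-- Since `exp ⟪v, w⟫ = ∑ₙ ∑_{a : Fin n → ι} ∏ⱼ v (a j) * w (a j) / n!`, these are the
coordinates of a feature map of the kernel `exp ⟪v, w⟫`. -/
noncomputable def expFeature {ι : Type*} (v : ι → ℝ) (p : Σ n : ℕ, Fin n → ι) : ℝ :=
  (∏ j, v (p.2 j)) / √(p.1.factorial : ℝ)

theorem expFeature_mul_expFeature {ι : Type*} (v w : ι → ℝ) (n : ℕ) (a : Fin n → ι) :
    expFeature v ⟨n, a⟩ * expFeature w ⟨n, a⟩ = (∏ j, v (a j) * w (a j)) / n.factorial := by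
  have hn : (0 : ℝ) ≤ n.factorial := by positivity
  rw [expFeature, expFeature, div_mul_div_comm, Real.mul_self_sqrt hn, Finset.prod_mul_distrib]

theorem hasSum_expFeature_mul {ι : Type*} {v w : ι → ℝ} (h : Summable fun i => |v i * w i|) :
    HasSum (fun p => expFeature v p * expFeature w p) (Real.exp (∑' i, v i * w i)) := by
  have hfiber : ∀ n : ℕ, HasSum (fun a : Fin n → ι => expFeature v ⟨n, a⟩ * expFeature w ⟨n, a⟩)
      ((∑' i, v i * w i) ^ n / n.factorial) := fun n => by
    simpa only [expFeature_mul_expFeature] using (hasSum_fin_prod_pow h n).div_const _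
  have hfiber_abs : ∀ n : ℕ, HasSum
      (fun a : Fin n → ι => |expFeature v ⟨n, a⟩ * expFeature w ⟨n, a⟩|)
      ((∑' i, |v i * w i|) ^ n / n.factorial) := fun n => by
    simpa only [expFeature_mul_expFeature, abs_div, Finset.abs_prod, Nat.abs_cast]
      using (hasSum_fin_prod_pow (h := fun i => |v i * w i|) (by simpa using h) n).div_const _
  have habs : Summable fun p => |expFeature v p * expFeature w p| :=
    (summable_sigma_of_nonneg fun _ => abs_nonneg _).2
      ⟨fun n => (hfiber_abs n).summable,
        (Real.summable_pow_div_factorial _).congr fun n => (hfiber_abs n).tsum_eq.symm⟩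
  exact (Real.exp_eq_exp_ℝ ▸ NormedSpace.expSeries_div_hasSum_exp _).sigma_of_hasSum hfiber
    habs.of_abs

theorem memℓp_two_iff {α : Type*} {E : α → Type*} [∀ i, NormedAddCommGroup (E i)]
    {f : ∀ i, E i} : Memℓp f 2 ↔ Summable fun i => ‖f i‖ ^ 2 := by
  simpa using memℓp_gen_iff (E := E) (p := 2) (f := f) (by norm_num)

theorem lp.norm_sq_eq_tsum {α : Type*} {E : α → Type*} [∀ i, NormedAddCommGroup (E i)]
    (f : lp E 2) : ‖f‖ ^ 2 = ∑' i, ‖f i‖ ^ 2 := by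
  simpa using lp.norm_rpow_eq_tsum (p := 2) (by norm_num) f

section GaussianFeature

variable {ι E : Type*} [NormedAddCommGroup E] [InnerProductSpace ℝ E]

theorem HilbertBasis.hasSum_inner_mul_inner_real (b : HilbertBasis ι ℝ E) (v w : E) :
    HasSum (fun i => ⟪b i, v⟫_ℝ * ⟪b i, w⟫_ℝ) ⟪v, w⟫_ℝ := by
  simpa only [real_inner_comm v] using b.hasSum_inner_mul_inner v w

theorem HilbertBasis.summable_abs_inner_mul_inner (b : HilbertBasis ι ℝ E) (v w : E) :
    Summable fun i => |⟪b i, v⟫_ℝ * ⟪b i, w⟫_ℝ| := by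
  refine .of_nonneg_of_le (fun _ => abs_nonneg _) (fun i => ?_)
    (((b.hasSum_inner_mul_inner_real v v).summable.add
      (b.hasSum_inner_mul_inner_real w w).summable).div_const 2)
  rw [abs_mul]
  nlinarith [sq_nonneg (|⟪b i, v⟫_ℝ| - |⟪b i, w⟫_ℝ|), sq_abs ⟪b i, v⟫_ℝ, sq_abs ⟪b i, w⟫_ℝ]

theorem hasSum_expFeature_inner (b : HilbertBasis ι ℝ E) (v w : E) :
    HasSum (fun p => expFeature (⟪b ·, v⟫_ℝ) p * expFeature (⟪b ·, w⟫_ℝ) p)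
      (Real.exp ⟪v, w⟫_ℝ) := by
  simpa only [(b.hasSum_inner_mul_inner_real v w).tsum_eq]
    using hasSum_expFeature_mul (b.summable_abs_inner_mul_inner v w)

noncomputable def gaussFeature (b : HilbertBasis ι ℝ E) (v : E) :
    lp (fun _ : Σ n : ℕ, Fin n → ι => ℝ) 2 :=
  ⟨fun p => Real.exp (-‖v‖ ^ 2 / 2) * expFeature (⟪b ·, v⟫_ℝ) p, by
    refine memℓp_two_iff.2 <| ((hasSum_expFeature_inner b v v).summable.mul_left
      (Real.exp (-‖v‖ ^ 2 / 2) ^ 2)).congr fun p => ?_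
    rw [Real.norm_eq_abs, sq_abs]
    ring⟩

theorem inner_gaussFeature (b : HilbertBasis ι ℝ E) (v w : E) :
    ⟪gaussFeature b v, gaussFeature b w⟫_ℝ = Real.exp (-‖v - w‖ ^ 2 / 2) := by
  have h := (hasSum_expFeature_inner b v w).mul_left
    (Real.exp (-‖v‖ ^ 2 / 2) * Real.exp (-‖w‖ ^ 2 / 2))
  rw [lp.inner_eq_tsum, norm_sub_sq_real,
    show -(‖v‖ ^ 2 - 2 * ⟪v, w⟫_ℝ + ‖w‖ ^ 2) / 2 = -‖v‖ ^ 2 / 2 + -‖w‖ ^ 2 / 2 + ⟪v, w⟫_ℝ by ring,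
    Real.exp_add, Real.exp_add, ← h.tsum_eq]
  refine tsum_congr fun p => ?_
  simp only [gaussFeature, RCLike.inner_apply, conj_trivial]
  ring

theorem norm_gaussFeature (b : HilbertBasis ι ℝ E) (v : E) : ‖gaussFeature b v‖ = 1 := by
  have h := inner_gaussFeature b v v
  rw [sub_self, norm_zero, real_inner_self_eq_norm_sq] at h
  exact (pow_eq_one_iff_of_nonneg (norm_nonneg _) two_ne_zero).1 (by simpa using h)

theorem norm_sub_gaussFeature_sq (b : HilbertBasis ι ℝ E) (v w : E) :
    ‖gaussFeature b v - gaussFeature b w‖ ^ 2 = 2 - 2 * Real.exp (-‖v - w‖ ^ 2 / 2) := by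
  rw [norm_sub_sq_real, inner_gaussFeature, norm_gaussFeature, norm_gaussFeature]
  ring

theorem norm_sub_gaussFeature_sq_le (b : HilbertBasis ι ℝ E) (v w : E) :
    ‖gaussFeature b v - gaussFeature b w‖ ^ 2 ≤ ‖v - w‖ ^ 2 := by
  rw [norm_sub_gaussFeature_sq]
  linarith [Real.add_one_le_exp (-‖v - w‖ ^ 2 / 2)]

theorem inner_gaussFeature_le_half (b : HilbertBasis ι ℝ E) {v w : E} (h : 2 ≤ ‖v - w‖) :
    ⟪gaussFeature b v, gaussFeature b w⟫_ℝ ≤ 1 / 2 := by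
  have hexp : 2 ≤ Real.exp 1 := by linarith [Real.add_one_le_exp 1]
  have hsq : 1 ≤ ‖v - w‖ ^ 2 / 2 := by nlinarith
  rw [inner_gaussFeature, neg_div, Real.exp_neg, inv_le_comm₀ (Real.exp_pos _) (by norm_num)]
  calc (1 / 2 : ℝ)⁻¹ ≤ Real.exp 1 := by norm_num [hexp]
    _ ≤ Real.exp (‖v - w‖ ^ 2 / 2) := Real.exp_le_exp.2 hsq

end GaussianFeature

theorem Real.sq_sqrt_sub_sqrt_le_abs {a b : ℝ} (ha : 0 ≤ a) (hb : 0 ≤ b) :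
    (√a - √b) ^ 2 ≤ |a - b| := by
  have hle : |√a - √b| ≤ √a + √b :=
    abs_sub_le_iff.2 ⟨by linarith [sqrt_nonneg b], by linarith [sqrt_nonneg a]⟩
  calc (√a - √b) ^ 2 = |√a - √b| * |√a - √b| := by rw [sq, abs_mul_abs_self]
    _ ≤ |√a - √b| * (√a + √b) := mul_le_mul_of_nonneg_left hle (abs_nonneg _)
    _ = |a - b| := by
      rw [← abs_of_nonneg (add_nonneg (sqrt_nonneg a) (sqrt_nonneg b)), ← abs_mul]
      congr 1
      linear_combination sq_sqrt ha - sq_sqrt hb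

section SqrtWeighted

variable {K : Type*} [NormedAddCommGroup K] [InnerProductSpace ℝ K]

theorem norm_sqrt_smul_sub_sqrt_smul_sq_le {a b : ℝ} (ha : 0 ≤ a) (hb : 0 ≤ b) {u v : K}
    (hu : ‖u‖ = 1) : ‖√a • u - √b • v‖ ^ 2 ≤ 2 * |a - b| + 2 * (b * ‖u - v‖ ^ 2) := by
  have htri : ‖√a • u - √b • v‖ ≤ |√a - √b| + √b * ‖u - v‖ := by
    calc ‖√a • u - √b • v‖ = ‖(√a - √b) • u + √b • (u - v)‖ := by
          rw [sub_smul, smul_sub]; abel_nf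
      _ ≤ |√a - √b| + √b * ‖u - v‖ := by
          refine (norm_add_le _ _).trans_eq ?_
          rw [norm_smul, norm_smul, hu, Real.norm_eq_abs, Real.norm_eq_abs,
            abs_of_nonneg (Real.sqrt_nonneg b), mul_one]
  have hsq : (|√a - √b| + √b * ‖u - v‖) ^ 2 ≤ 2 * (√a - √b) ^ 2 + 2 * (b * ‖u - v‖ ^ 2) := by
    nlinarith [sq_nonneg (|√a - √b| - √b * ‖u - v‖), sq_abs (√a - √b), Real.sq_sqrt hb]
  nlinarith [pow_le_pow_left₀ (norm_nonneg _) htri 2, Real.sq_sqrt_sub_sqrt_le_abs ha hb]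

theorem inner_sqrt_smul_sqrt_smul_le {a b c : ℝ} (ha : 0 ≤ a) (hb : 0 ≤ b) (hc : 0 ≤ c)
    {u v : K} (h : a ≠ 0 → b ≠ 0 → ⟪u, v⟫_ℝ ≤ c) : ⟪√a • u, √b • v⟫_ℝ ≤ (a + b) / 2 * c := by
  rw [real_inner_smul_left, real_inner_smul_right, ← mul_assoc]
  have hamgm : √a * √b ≤ (a + b) / 2 := by
    nlinarith [sq_nonneg (√a - √b), Real.sq_sqrt ha, Real.sq_sqrt hb]
  rcases eq_or_ne a 0 with rfl | ha0
  · simp; positivity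
  rcases eq_or_ne b 0 with rfl | hb0
  · simp; positivity
  calc √a * √b * ⟪u, v⟫_ℝ ≤ √a * √b * c :=
        mul_le_mul_of_nonneg_left (h ha0 hb0) (by positivity)
    _ ≤ (a + b) / 2 * c := mul_le_mul_of_nonneg_right hamgm hc

end SqrtWeighted

def SphereEmbeddableAtScale (Z : Type*) [PseudoMetricSpace Z] (R ε S : ℝ) : Prop :=
  ∃ (H : Type) (_ : NormedAddCommGroup H) (_ : InnerProductSpace ℝ H) (_ : CompleteSpace H)
    (ξ : Z → H), (∀ x, ‖ξ x‖ = 1) ∧ (∀ x y, dist x y ≤ R → ‖ξ x - ξ y‖ ^ 2 ≤ ε) ∧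
      ∀ x y, S ≤ dist x y → 1 ≤ ‖ξ x - ξ y‖ ^ 2

theorem sphereEmbeddableAtScale_of_partition {Z : Type*} [PseudoMetricSpace Z] {I E : Type}
    [NormedAddCommGroup E] [InnerProductSpace ℝ E] [CompleteSpace E] {R ε S : ℝ}
    (w : I → Z → ℝ) (hw0 : ∀ i x, 0 ≤ w i x) (hw1 : ∀ x, HasSum (w · x) 1)
    (hvar : ∀ x y, dist x y ≤ R → ∃ s ≤ ε / 4, HasSum (fun i => |w i x - w i y|) s)
    (u : I → Z → E) (hclose : ∀ i x y, w i y ≠ 0 → dist x y ≤ R → ‖u i x - u i y‖ ^ 2 ≤ ε / 4)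
    (hfar : ∀ i x y, w i x ≠ 0 → w i y ≠ 0 → S ≤ dist x y → 2 ≤ ‖u i x - u i y‖) :
    SphereEmbeddableAtScale Z R ε S := by
  obtain ⟨ι, b, -⟩ := exists_hilbertBasis ℝ E
  set η : I → Z → lp (fun _ : Σ n : ℕ, Fin n → ι => ℝ) 2 := fun i x => gaussFeature b (u i x)
  have hη : ∀ i x, ‖η i x‖ = 1 := fun i x => norm_gaussFeature b _
  have hcoord : ∀ x i, ‖√(w i x) • η i x‖ ^ 2 = w i x := fun x i => by
    rw [norm_smul, hη, Real.norm_eq_abs, abs_of_nonneg (Real.sqrt_nonneg _), mul_one,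
      Real.sq_sqrt (hw0 i x)]
  let ξ : Z → lp (fun _ : I => lp (fun _ : Σ n : ℕ, Fin n → ι => ℝ) 2) 2 := fun x =>
    ⟨fun i => √(w i x) • η i x, memℓp_two_iff.2 <| by simpa only [hcoord] using (hw1 x).summable⟩
  have hξ : ∀ x, ‖ξ x‖ = 1 := fun x => by
    have h := lp.norm_sq_eq_tsum (ξ x)
    rw [tsum_congr (hcoord x), (hw1 x).tsum_eq] at h
    exact (pow_eq_one_iff_of_nonneg (norm_nonneg _) two_ne_zero).1 h
  refine ⟨_, inferInstance, inferInstance, inferInstance, ξ, hξ, fun x y hxy => ?_,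
    fun x y hxy => ?_⟩
  · obtain ⟨s, hs, hsum⟩ := hvar x y hxy
    have hterm : ∀ i, ‖(ξ x - ξ y) i‖ ^ 2 ≤ 2 * |w i x - w i y| + 2 * (w i y * (ε / 4)) := by
      intro i
      have hη_close : w i y * ‖η i x - η i y‖ ^ 2 ≤ w i y * (ε / 4) := by
        rcases eq_or_ne (w i y) 0 with h0 | h0
        · simp [h0]
        · exact mul_le_mul_of_nonneg_left
            ((norm_sub_gaussFeature_sq_le b _ _).trans (hclose i x y h0 hxy)) (hw0 i y)
      show ‖√(w i x) • η i x - √(w i y) • η i y‖ ^ 2 ≤ _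
      linarith [norm_sqrt_smul_sub_sqrt_smul_sq_le (hw0 i x) (hw0 i y) (hη i x) (v := η i y)]
    have hbound : HasSum (fun i => 2 * |w i x - w i y| + 2 * (w i y * (ε / 4)))
        (2 * s + 2 * (1 * (ε / 4))) :=
      (hsum.mul_left 2).add (((hw1 y).mul_right (ε / 4)).mul_left 2)
    rw [lp.norm_sq_eq_tsum]
    refine (Summable.tsum_le_tsum hterm ?_ hbound.summable).trans ?_
    · exact memℓp_two_iff.1 (lp.memℓp (ξ x - ξ y))
    · rw [hbound.tsum_eq]; linarith
  · have hinner : ⟪ξ x, ξ y⟫_ℝ ≤ 1 / 2 := by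
      have hterm : ∀ i, ⟪ξ x i, ξ y i⟫_ℝ ≤ (w i x + w i y) / 2 * (1 / 2) := fun i =>
        inner_sqrt_smul_sqrt_smul_le (hw0 i x) (hw0 i y) (by norm_num) fun hx hy =>
          inner_gaussFeature_le_half b (hfar i x y hx hy hxy)
      have hbound : HasSum (fun i => (w i x + w i y) / 2 * (1 / 2)) ((1 + 1) / 2 * (1 / 2)) :=
        (((hw1 x).add (hw1 y)).div_const 2).mul_right _
      rw [lp.inner_eq_tsum]
      refine (Summable.tsum_le_tsum hterm (lp.summable_inner _ _) hbound.summable).trans ?_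
      rw [hbound.tsum_eq]; norm_num
    rw [norm_sub_sq_real, hξ x, hξ y]
    linarith

theorem summable_and_tsum_le_of_le_geometric {a : ℕ → ℝ} (m : ℕ) (h0 : ∀ k, 0 ≤ a k)
    (h4 : ∀ k, a k ≤ 4) (hgeom : ∀ k, m ≤ k → a k ≤ (1 / 2) ^ k) :
    Summable a ∧ ∑' k, a k ≤ 4 * m + 2 := by
  have htail : ∀ k, a (k + m) ≤ (1 / 2) ^ k := fun k =>
    (hgeom _ (Nat.le_add_left m k)).trans
      (pow_le_pow_of_le_one (by norm_num) (by norm_num) (Nat.le_add_right k m))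
  have hsum_tail : Summable fun k => a (k + m) :=
    .of_nonneg_of_le (fun k => h0 _) htail summable_geometric_two
  have ha : Summable a := (summable_nat_add_iff m).1 hsum_tail
  refine ⟨ha, ?_⟩
  have hhead : ∑ k ∈ Finset.range m, a k ≤ 4 * m := by
    simpa [mul_comm] using Finset.sum_le_sum fun k (_ : k ∈ Finset.range m) => h4 k
  have htail_le : ∑' k, a (k + m) ≤ 2 :=
    (hsum_tail.tsum_le_tsum htail summable_geometric_two).trans_eq tsum_geometric_two
  rw [← ha.sum_add_tsum_nat_add m]
  linarith

noncomputable def scaleCount (S : ℕ → ℝ) (r : ℝ) : ℕ :=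
  ((Finset.range ⌈r⌉₊).filter (S · ≤ r)).card

theorem monotone_scaleCount (S : ℕ → ℝ) : Monotone (scaleCount S) := fun r r' h =>
  Finset.card_le_card fun k hk => by
    simp only [Finset.mem_filter, Finset.mem_range] at hk ⊢
    exact ⟨hk.1.trans_le (Nat.ceil_mono h), hk.2.trans h⟩

theorem tendsto_scaleCount (S : ℕ → ℝ) : Tendsto (scaleCount S) atTop atTop := by
  refine tendsto_atTop_atTop.2 fun N => ⟨N + ∑ k ∈ Finset.range N, |S k|, fun r hr => ?_⟩
  have hsum_nonneg : 0 ≤ ∑ k ∈ Finset.range N, |S k| := Finset.sum_nonneg fun k _ => abs_nonneg _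
  calc N = (Finset.range N).card := (Finset.card_range N).symm
    _ ≤ scaleCount S r := Finset.card_le_card fun k hk => by
      rw [Finset.mem_range] at hk
      have hkr : (k : ℝ) < r := by
        have : (k : ℝ) < N := by exact_mod_cast hk
        linarith
      have hSk : S k ≤ ∑ k ∈ Finset.range N, |S k| :=
        (le_abs_self _).trans (Finset.single_le_sum (fun k _ => abs_nonneg (S k))
          (Finset.mem_range.2 hk))
      simp only [Finset.mem_filter, Finset.mem_range]
      exact ⟨Nat.lt_ceil.2 hkr, by linarith [Nat.cast_nonneg (α := ℝ) N]⟩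

theorem exists_embedding_of_sphereEmbeddable {Z : Type*} [PseudoMetricSpace Z] {S : ℕ → ℝ}
    (h : ∀ k : ℕ, SphereEmbeddableAtScale Z (k + 1) ((1 / 2) ^ k) (S k)) :
    ∃ (H : Type) (_ : NormedAddCommGroup H) (_ : InnerProductSpace ℝ H) (_ : CompleteSpace H)
      (Φ : Z → H), ∀ x y, √(scaleCount S (dist x y)) ≤ ‖Φ x - Φ y‖ ∧
        ‖Φ x - Φ y‖ ≤ √(4 * ⌈dist x y⌉₊ + 2) := by
  choose H _ _ _ ξ hξ hclose hfar using h
  rcases isEmpty_or_nonempty Z with hZ | ⟨⟨x₀⟩⟩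
  · exact ⟨ℝ, inferInstance, inferInstance, inferInstance, fun _ => 0, fun x => hZ.elim x⟩
  have hle4 : ∀ k x y, ‖ξ k x - ξ k y‖ ^ 2 ≤ 4 := fun k x y => by
    nlinarith [norm_sub_le (ξ k x) (ξ k y), norm_nonneg (ξ k x - ξ k y), hξ k x, hξ k y]
  have hsq : ∀ x y, Summable (fun k => ‖ξ k x - ξ k y‖ ^ 2) ∧
      ∑' k, ‖ξ k x - ξ k y‖ ^ 2 ≤ 4 * ⌈dist x y⌉₊ + 2 := fun x y =>
    summable_and_tsum_le_of_le_geometric (a := fun k => ‖ξ k x - ξ k y‖ ^ 2) _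
      (fun k => sq_nonneg _) (fun k => hle4 k x y)
      fun k hk => hclose k x y <| (Nat.le_ceil _).trans (by exact_mod_cast hk.trans k.le_succ)
  let Φ : Z → lp (fun k => H k) 2 := fun x =>
    ⟨fun k => ξ k x - ξ k x₀, memℓp_two_iff.2 (hsq x x₀).1⟩
  have hΦ : ∀ x y, ‖Φ x - Φ y‖ ^ 2 = ∑' k, ‖ξ k x - ξ k y‖ ^ 2 := fun x y => by
    rw [lp.norm_sq_eq_tsum]
    exact tsum_congr fun k => congrArg (‖·‖ ^ 2) (sub_sub_sub_cancel_right _ _ _)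
  refine ⟨_, inferInstance, inferInstance, inferInstance, Φ, fun x y => ⟨?_, ?_⟩⟩
  · rw [← Real.sqrt_sq (norm_nonneg (Φ x - Φ y)), hΦ]
    refine Real.sqrt_le_sqrt ?_
    calc (scaleCount S (dist x y) : ℝ)
        = ∑ _k ∈ (Finset.range ⌈dist x y⌉₊).filter (S · ≤ dist x y), (1 : ℝ) := by
          simp [scaleCount]
      _ ≤ ∑ k ∈ (Finset.range ⌈dist x y⌉₊).filter (S · ≤ dist x y), ‖ξ k x - ξ k y‖ ^ 2 :=
          Finset.sum_le_sum fun k hk => hfar k x y (Finset.mem_filter.1 hk).2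
      _ ≤ ∑' k, ‖ξ k x - ξ k y‖ ^ 2 :=
          (hsq x y).1.sum_le_tsum _ fun k _ => sq_nonneg _
  · rw [← Real.sqrt_sq (norm_nonneg (Φ x - Φ y)), hΦ]
    exact Real.sqrt_le_sqrt (hsq x y).2

theorem unifCoarseEmbedHilbert_of_forall {J : Type*} {X : J → Type*}
    {d : ∀ j, X j → X j → ℝ} {ρm ρp : ℝ → ℝ} (hm : Monotone ρm) (hp : Monotone ρp)
    (htendsto : Tendsto ρm atTop atTop)
    (h : ∀ j, ∃ (H : Type) (_ : NormedAddCommGroup H) (_ : InnerProductSpace ℝ H)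
      (_ : CompleteSpace H) (F : X j → H),
        ∀ x y, ρm (d j x y) ≤ ‖F x - F y‖ ∧ ‖F x - F y‖ ≤ ρp (d j x y)) :
    UnifCoarseEmbedHilbert X d := by
  choose H iN iI iC F hF using h
  exact ⟨H, iN, iI, iC, F, ρm, ρp, hm, hp, htendsto, fun j x y => by
    simpa only [dist_eq_norm] using hF j x y⟩

theorem unifCoarseEmbedHilbert_of_sphereEmbeddable {J : Type*} {X : J → Type*}
    [∀ j, PseudoMetricSpace (X j)]
    (h : ∀ k : ℕ, ∃ S, ∀ j, SphereEmbeddableAtScale (X j) (k + 1) ((1 / 2) ^ k) S) :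
    UnifCoarseEmbedHilbert X fun _ x y => dist x y := by
  choose S hS using h
  refine unifCoarseEmbedHilbert_of_forall (ρm := fun r => √(scaleCount S r))
    (ρp := fun r => √(4 * ⌈r⌉₊ + 2)) (fun r r' hr => ?_) (fun r r' hr => ?_) ?_
    fun j => exists_embedding_of_sphereEmbeddable fun k => hS k j
  · exact Real.sqrt_le_sqrt (by exact_mod_cast monotone_scaleCount S hr)
  · exact Real.sqrt_le_sqrt (by gcongr)
  · exact Real.tendsto_sqrt_atTop.comp (tendsto_natCast_atTop_atTop.comp (tendsto_scaleCount S))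

theorem exists_smul_dist_le_of_dist_le {G Y : Type*} [Monoid G] [PseudoMetricSpace Y]
    [MulAction G Y] (hiso : ∀ g : G, Isometry (fun y : Y => g • y)) {C D : ℝ}
    (hC : ∀ y y' : Y, ∃ g : G, dist (g • y) y' ≤ C) {A : Set Y}
    (hA : ∀ y ∈ A, ∀ z ∈ A, dist y z ≤ D) (y₀ : Y) :
    ∃ g : G, ∀ y ∈ A, dist (g • y) y₀ ≤ D + C := by
  rcases A.eq_empty_or_nonempty with rfl | ⟨z, hz⟩
  · exact ⟨1, fun y hy => hy.elim⟩
  obtain ⟨g, hg⟩ := hC z y₀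
  refine ⟨g, fun y hy => ?_⟩
  calc dist (g • y) y₀ ≤ dist (g • y) (g • z) + dist (g • z) y₀ := dist_triangle _ _ _
    _ ≤ D + C := by rw [(hiso g).dist_eq]; exact add_le_add (hA y hy z hz) hg

theorem exists_smul_mem_closedBall {G X Y I : Type*} [Monoid G] [PseudoMetricSpace X]
    [PseudoMetricSpace Y] [MulAction G X] [MulAction G Y]
    (hiso : ∀ g : G, Isometry (fun y : Y => g • y)) {F : X → Y} (hFlip : LipschitzWith 1 F)
    (hFequiv : ∀ (g : G) (x : X), F (g • x) = g • F x) {C D R : ℝ}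
    (hC : ∀ y y' : Y, ∃ g : G, dist (g • y) y' ≤ C) {φ : I → Y → ℝ}
    (hφ : ∀ i y z, φ i y ≠ 0 → φ i z ≠ 0 → dist y z ≤ D) (y₀ : Y) :
    ∃ g : I → G, ∀ i x y, φ i (F y) ≠ 0 → dist x y ≤ R →
      F (g i • x) ∈ Metric.closedBall y₀ (R + D + C) := by
  choose g hg using fun i => exists_smul_dist_le_of_dist_le hiso hC
    (A := {y | φ i y ≠ 0}) (fun y hy z hz => hφ i y z hy hz) y₀
  refine ⟨g, fun i x y hy hxy => ?_⟩
  have hFdist : dist (F x) (F y) ≤ dist x y := by simpa using hFlip.dist_le_mul x y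
  rw [Metric.mem_closedBall, hFequiv]
  calc dist (g i • F x) y₀ ≤ dist (g i • F x) (g i • F y) + dist (g i • F y) y₀ :=
        dist_triangle _ _ _
    _ ≤ R + (D + C) := by
        rw [(hiso (g i)).dist_eq]
        exact add_le_add (hFdist.trans hxy) (hg i _ hy)
    _ = R + D + C := by ring

theorem sphereEmbeddableAtScale_of_fibering {G J : Type*} [Group G] (X Y : J → Type*)
    [∀ j, PseudoMetricSpace (X j)] [∀ j, PseudoMetricSpace (Y j)]
    [∀ j, MulAction G (X j)] [∀ j, MulAction G (Y j)]
    (hisoX : ∀ j (g : G), Isometry (fun x : X j => g • x))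
    (hisoY : ∀ j (g : G), Isometry (fun y : Y j => g • y))
    (F : ∀ j, X j → Y j) (hFlip : ∀ j, LipschitzWith 1 (F j))
    (hFequiv : ∀ j (g : G) (x : X j), F j (g • x) = g • F j x)
    (hYexact : EquiExact Y (fun j (y y' : Y j) => dist y y'))
    (hcobdd : ∃ C > (0:ℝ), ∀ j (y y' : Y j), ∃ g : G, dist (g • y) y' ≤ C)
    (y₀ : ∀ j, Y j)
    (hballs : ∀ R : ℝ, 0 ≤ R →
      UnifCoarseEmbedHilbert
        (fun j => {x : X j // F j x ∈ Metric.closedBall (y₀ j) R})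
        (fun j a b => dist (a : X j) (b : X j)))
    {R ε : ℝ} (hR : 0 < R) (hε : 0 < ε) :
    ∃ S, ∀ j, SphereEmbeddableAtScale (X j) R ε S := by
  obtain ⟨C, hC0, hC⟩ := hcobdd
  obtain ⟨D, hD0, hpart⟩ := hYexact R hR (ε / 4) (by positivity)
  obtain ⟨H, _, _, _, ψ, ρm, ρp, -, hρp, hρm, hψ⟩ := hballs (R + D + C) (by positivity)
  set c := √(ε / 4) / (|ρp R| + 1) with hc
  have hc0 : 0 < c := by positivity
  obtain ⟨S, hS⟩ := Filter.eventually_atTop.1 (hρm.eventually_ge_atTop (2 / c))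
  refine ⟨S, fun j => ?_⟩
  obtain ⟨I, φ, hφ01, hφ1, hφvar, hφdiam⟩ := hpart j
  have hFdist : ∀ x y : X j, dist (F j x) (F j y) ≤ dist x y := fun x y => by
    simpa using (hFlip j).dist_le_mul x y
  obtain ⟨g, hball⟩ := exists_smul_mem_closedBall (hisoY j) (hFlip j) (hFequiv j) (hC j) hφdiam
    (y₀ j) (R := R)
  have hball_self : ∀ i x, φ i (F j x) ≠ 0 →
      F j (g i • x) ∈ Metric.closedBall (y₀ j) (R + D + C) := fun i x hx =>
    hball i x x hx (by rw [dist_self]; exact hR.le)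
  let ψ' : X j → H j := Function.extend Subtype.val (ψ j) 0
  have hψ' : ∀ x (hx : F j x ∈ Metric.closedBall (y₀ j) (R + D + C)), ψ' x = ψ j ⟨x, hx⟩ :=
    fun x hx => Subtype.val_injective.extend_apply _ _ ⟨x, hx⟩
  refine sphereEmbeddableAtScale_of_partition (fun i x => φ i (F j x)) (fun i x => (hφ01 i _).1)
    (fun x => hφ1 _) (fun x y hxy => hφvar _ _ ((hFdist x y).trans hxy))
    (fun i x => c • ψ' (g i • x)) (fun i x y hy hxy => ?_) (fun i x y hx hy hxy => ?_)
  · have hdist : dist (ψ j ⟨_, hball i x y hy hxy⟩) (ψ j ⟨_, hball_self i y hy⟩) ≤ |ρp R| :=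
      ((hψ j _ _).2.trans (hρp (by simpa [(hisoX j (g i)).dist_eq] using hxy))).trans
        (le_abs_self _)
    rw [← smul_sub, norm_smul, Real.norm_eq_abs, abs_of_pos hc0, hψ' _ (hball i x y hy hxy),
      hψ' _ (hball_self i y hy), ← dist_eq_norm]
    have hcd : c * dist (ψ j ⟨_, hball i x y hy hxy⟩) (ψ j ⟨_, hball_self i y hy⟩) ≤ √(ε / 4) := by
      calc _ ≤ c * (|ρp R| + 1) := by gcongr; linarith
        _ = √(ε / 4) := by rw [hc]; field_simp
    calc _ ≤ √(ε / 4) ^ 2 := by gcongr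
      _ = ε / 4 := Real.sq_sqrt (by positivity)
  · have hdist : 2 / c ≤ dist (ψ j ⟨_, hball_self i x hx⟩) (ψ j ⟨_, hball_self i y hy⟩) :=
      (hS _ hxy).trans <| by
        simpa [(hisoX j (g i)).dist_eq] using (hψ j ⟨_, hball_self i x hx⟩ ⟨_, hball_self i y hy⟩).1
    rw [← smul_sub, norm_smul, Real.norm_eq_abs, abs_of_pos hc0, hψ' _ (hball_self i x hx),
      hψ' _ (hball_self i y hy), ← dist_eq_norm]
    calc (2 : ℝ) = c * (2 / c) := by field_simp
      _ ≤ _ := by gcongr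

/-- Fibering lemma: given `G`-equivariant 1-Lipschitz maps
`F_n : X_n → Y_n` onto an equi-exact sequence with uniformly cobounded isometric
`G`-actions, if the preimages of balls embed uniformly then `(X_n)` embeds uniformly. -/
theorem statement15 {G : Type*} [Group G] (X Y : ℕ → Type*)
    [∀ n, MetricSpace (X n)] [∀ n, MetricSpace (Y n)]
    [∀ n, MulAction G (X n)] [∀ n, MulAction G (Y n)]
    (hisoX : ∀ n (g : G), Isometry (fun x : X n => g • x))
    (hisoY : ∀ n (g : G), Isometry (fun y : Y n => g • y))
    (F : ∀ n, X n → Y n)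
    (hFlip : ∀ n, LipschitzWith 1 (F n))
    (hFequiv : ∀ n (g : G) (x : X n), F n (g • x) = g • F n x)
    (hYexact : EquiExact Y (fun n (y y' : Y n) => dist y y'))
    (hcobdd : ∃ C > (0:ℝ), ∀ n (y y' : Y n), ∃ g : G, dist (g • y) y' ≤ C)
    (y₀ : ∀ n, Y n)
    (hballs : ∀ R : ℝ, 0 ≤ R →
      UnifCoarseEmbedHilbert
        (fun n => {x : X n // F n x ∈ Metric.closedBall (y₀ n) R})
        (fun n a b => dist (a : X n) (b : X n))) :
    UnifCoarseEmbedHilbert X (fun n (x y : X n) => dist x y) :=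
  unifCoarseEmbedHilbert_of_sphereEmbeddable fun k =>
    sphereEmbeddableAtScale_of_fibering X Y hisoX hisoY F hFlip hFequiv hYexact hcobdd y₀ hballs
      k.cast_add_one_pos (by positivity)
end
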